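/- arXiv:2501.13278 — 4 statements merged into one kernel-verified Lean document; each statement's English description precedes it below -/
import Mathlib

section
/- Let n, d, β be natural numbers with 1 ≤ β and 2·d·β² < n. Let A₂ be the DPSR-I algorithm that, given a d-subset e of the ground set V of size n, outputs e ∪ B where B is a subset of V of size β chosen uniformly at random among all β-subsets of V. Then A₂ is an (ε1,ε2,δ,β)-differentially private subset-retrieval algorithm with ε1 = 0, ε2 = 0, and δ = 1 − (β−1)/(n−d), where n, d, β are interpreted as real numbers. -/
open scoped ENNReal

/-- Distance between two finite sets: `d(e,f) = max(|e \ f|, |f \ e|)`. -/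
def setDist {γ : Type*} [DecidableEq γ] (e f : Finset γ) : ℕ :=
  max (e \ f).card (f \ e).card

/-- Probability that a sample from the PMF `μ` lands in the set `S`. -/
noncomputable def pr {γ : Type*} (μ : PMF γ) (S : Set γ) : ℝ :=
  (μ.toOuterMeasure S).toReal

/-- `A` is an `(ε1, ε2, δ, β)_{n,d}` differentially-private solution to the
subset-retrieval problem. -/
def IsDP (n d β : ℕ) (ε1 ε2 δ : ℝ)
    (A : Finset (Fin n) → PMF (Finset (Fin n))) : Prop :=
  (∀ e : Finset (Fin n), e.card = d →
      pr (A e) {s | setDist s e ≤ β} ≥ 1 - ε1) ∧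
  (∀ ei ej : Finset (Fin n), ei.card = d → ej.card = d → setDist ei ej = 1 →
      ∀ S : Set (Finset (Fin n)),
        pr (A ei) S ≤ Real.exp ε2 * pr (A ej) S + δ)

/-! Accuracy is certain: the output `e ∪ B` with `|B| = β` differs from `e` only by `B \ e`.
For privacy write `eᵢ = C ∪ {x}`, `eⱼ = C ∪ {y}`. The transposition `(x y)` preserves the uniform law
of `B`, and on the event `y ∈ B` the output `eᵢ ∪ B` equals `eⱼ ∪ (x y)B`; hence
`Pr[A(eᵢ) ∈ S] ≤ Pr[A(eⱼ) ∈ S] + Pr[y ∉ B] = Pr[A(eⱼ) ∈ S] + 1 - β/n`, and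
`β/n ≥ (β - 1)/(n - d)` as soon as `βd ≤ n`. -/

open Finset

section SetDist

variable {α : Type*} [DecidableEq α]

lemma setDist_union_self_le (e B : Finset α) : setDist (e ∪ B) e ≤ #B := by
  rw [setDist, union_sdiff_left, sdiff_eq_empty_iff_subset.2 subset_union_left, card_empty]
  exact max_le (card_le_card sdiff_subset) (Nat.zero_le _)

lemma exists_sdiff_eq_singleton_of_setDist_eq_one {e f : Finset α} (hcard : #e = #f)
    (h : setDist e f = 1) : ∃ x y, e \ f = {x} ∧ f \ e = {y} := by
  rw [setDist, card_sdiff_comm hcard, max_self] at h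
  obtain ⟨x, hx⟩ := card_eq_one.1 ((card_sdiff_comm hcard).trans h)
  obtain ⟨y, hy⟩ := card_eq_one.1 h
  exact ⟨x, y, hx, hy⟩

/-- If `x ∈ B` the swap fixes `B`; otherwise it trades `y ∈ B` for `x`. -/
lemma union_eq_union_map_swap {e f B : Finset α} {x y : α} (hx : e \ f = {x})
    (hy : f \ e = {y}) (hyB : y ∈ B) : e ∪ B = f ∪ B.map (Equiv.swap x y).toEmbedding := by
  ext a
  have hxa := congrArg (a ∈ ·) hx
  have hya := congrArg (a ∈ ·) hy
  simp only [mem_sdiff, mem_singleton, eq_iff_iff] at hxa hya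
  simp only [mem_union, mem_map_equiv, Equiv.symm_swap, Equiv.swap_apply_def]
  grind

end SetDist

section Pr

variable {γ δ : Type*} (p : PMF γ)

lemma pr_map (f : γ → δ) (S : Set δ) : pr (p.map f) S = pr p (f ⁻¹' S) := by
  rw [pr, pr, PMF.toOuterMeasure_map_apply]

lemma pr_eq_one_of_support_subset {S : Set γ} (h : p.support ⊆ S) : pr p S = 1 := by
  rw [pr, (PMF.toOuterMeasure_apply_eq_one_iff p S).2 h, ENNReal.toReal_one]

lemma pr_le_add_of_subset_union {S T U : Set γ} (h : S ⊆ T ∪ U) :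
    pr p S ≤ pr p T + pr p U := by
  have hfin : ∀ V, p.toOuterMeasure V ≠ ⊤ := fun V =>
    p.toOuterMeasure_apply V ▸ p.tsum_coe_indicator_ne_top V
  rw [pr, pr, pr, ← ENNReal.toReal_add (hfin T) (hfin U)]
  exact ENNReal.toReal_mono (ENNReal.add_ne_top.2 ⟨hfin T, hfin U⟩)
    ((MeasureTheory.measure_mono h).trans (MeasureTheory.measure_union_le T U))

lemma pr_preimage_equiv_of_apply_eq {σ : γ ≃ γ} (hσ : ∀ a, p (σ a) = p a) (T : Set γ) :
    pr p (σ ⁻¹' T) = pr p T := by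
  rw [pr, pr, PMF.toOuterMeasure_apply, PMF.toOuterMeasure_apply,
    ← σ.tsum_eq (fun a => T.indicator p a)]
  exact congrArg ENNReal.toReal (tsum_congr fun a => by
    rw [← Set.indicator_comp_right, show ⇑p ∘ σ = p from funext hσ])

end Pr

section UniformSubsets

variable {α : Type*} [Fintype α] {k : ℕ} (hk : k ≤ Fintype.card α)

noncomputable def uniformSubsets : PMF (Finset α) :=
  PMF.uniformOfFinset (powersetCard k univ) (powersetCard_nonempty.2 (by simpa using hk))

lemma uniformSubsets_apply (B : Finset α) :
    uniformSubsets hk B = if #B = k then ((Fintype.card α).choose k : ℝ≥0∞)⁻¹ else 0 := by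
  simp [uniformSubsets]

lemma uniformSubsets_apply_map_equiv (σ : α ≃ α) (B : Finset α) :
    uniformSubsets hk (B.map σ.toEmbedding) = uniformSubsets hk B := by
  simp only [uniformSubsets_apply, card_map]

lemma pr_uniformSubsets_notMem (y : α) :
    pr (uniformSubsets hk) {B | y ∉ B} = 1 - k / Fintype.card α := by
  classical
  have hcount : #{B ∈ powersetCard k (univ : Finset α) | y ∉ B}
      = (Fintype.card α - 1).choose k := by
    rw [← card_univ, ← card_erase_of_mem (mem_univ y), ← card_powersetCard]
    congr 1
    ext B
    simp only [mem_filter, mem_powersetCard, subset_erase, subset_univ, true_and]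
    tauto
  simp only [pr, uniformSubsets, PMF.toOuterMeasure_uniformOfFinset_apply, Set.mem_ofPred_eq,
    hcount, card_powersetCard, card_univ]
  obtain ⟨m, hm⟩ := Nat.exists_eq_add_one_of_ne_zero (Fintype.card_pos_iff.2 ⟨y⟩).ne'
  have hkm : k ≤ m + 1 := hm ▸ hk
  rw [hm]
  have hpos : (0 : ℝ) < (m + 1).choose k := by exact_mod_cast Nat.choose_pos hkm
  have hpascal : (m.choose k : ℝ) * (m + 1) = (m + 1).choose k * (m + 1 - k) := by
    exact_mod_cast Nat.choose_mul_succ_eq m k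
  rw [Nat.add_sub_cancel, ENNReal.toReal_div, ENNReal.toReal_natCast, ENNReal.toReal_natCast]
  field_simp
  push_cast
  linarith

end UniformSubsets

lemma pr_map_union_le_of_swap_invariant {α : Type*} [DecidableEq α] (p : PMF (Finset α))
    {e f : Finset α} {x y : α} (hp : ∀ B, p (B.map (Equiv.swap x y).toEmbedding) = p B)
    (hx : e \ f = {x}) (hy : f \ e = {y}) (S : Set (Finset α)) :
    pr (p.map (e ∪ ·)) S ≤ pr (p.map (f ∪ ·)) S + pr p {B | y ∉ B} := by
  have hσ : ∀ B, p ((Equiv.swap x y).finsetCongr B) = p B := hp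
  rw [pr_map, pr_map, ← pr_preimage_equiv_of_apply_eq p hσ ((f ∪ ·) ⁻¹' S)]
  refine pr_le_add_of_subset_union p fun B hB => ?_
  by_cases hyB : y ∈ B
  · left
    change f ∪ B.map (Equiv.swap x y).toEmbedding ∈ S
    rwa [← union_eq_union_map_swap hx hy hyB]
  · exact Or.inr hyB

lemma sub_one_div_sub_le_div {β d n : ℕ} (hd : d < n) (h : β * d ≤ n) :
    ((β : ℝ) - 1) / (n - d) ≤ β / n := by
  have hd' : (d : ℝ) < n := by exact_mod_cast hd
  have h' : (β : ℝ) * d ≤ n := by exact_mod_cast h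
  rw [div_le_div_iff₀ (by linarith) (by linarith)]
  nlinarith

theorem stmt_6 (n d β : ℕ) (hβ1 : 1 ≤ β) (hn : 2 * d * β ^ 2 < n)
    (μ : PMF (Finset (Fin n)))
    (hμ : ∀ B : Finset (Fin n),
      μ B = if B.card = β then ((n.choose β : ℝ≥0∞))⁻¹ else 0)
    (A : Finset (Fin n) → PMF (Finset (Fin n)))
    (hA : ∀ e : Finset (Fin n), e.card = d → A e = μ.map (fun B => e ∪ B)) :
    IsDP n d β 0 0 (1 - ((β : ℝ) - 1) / ((n : ℝ) - d)) A := by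
  have hsupp : ∀ B ∈ μ.support, #B = β := fun B hB => by
    by_contra h
    exact hB (by rw [hμ, if_neg h])
  have hβn : β ≤ Fintype.card (Fin n) := by
    obtain ⟨B, hB⟩ := μ.support_nonempty
    exact hsupp B hB ▸ card_le_univ B
  have hμ_eq : μ = uniformSubsets hβn :=
    PMF.ext fun B => by rw [hμ, uniformSubsets_apply, Fintype.card_fin]
  refine ⟨fun e he => ?_, fun ei ej hi hj hdist S => ?_⟩
  · rw [hA e he, sub_zero]
    refine (pr_eq_one_of_support_subset _ ?_).ge
    rw [PMF.support_map]
    rintro _ ⟨B, hB, rfl⟩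
    exact (setDist_union_self_le e B).trans (hsupp B hB).le
  · obtain ⟨x, y, hx, hy⟩ := exists_sdiff_eq_singleton_of_setDist_eq_one (hi.trans hj.symm) hdist
    have hβd : β * d ≤ 2 * d * β ^ 2 := by
      nlinarith [Nat.mul_le_mul_left (β * d) (show 1 ≤ 2 * β by omega)]
    have hdn : d < n := by nlinarith
    rw [hA ei hi, hA ej hj, Real.exp_zero, one_mul, hμ_eq]
    calc _ ≤ _ := pr_map_union_le_of_swap_invariant _
          (uniformSubsets_apply_map_equiv hβn _) hx hy S
      _ = _ + (1 - β / n) := by rw [pr_uniformSubsets_notMem, Fintype.card_fin]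
      _ ≤ _ := by linarith [sub_one_div_sub_le_div hdn (hβd.trans hn.le)]
end

section
/- Let V be a finite set of size n, and let e_i, e_l ⊆ V with |e_i| = |e_l| = d and d(e_i,e_l) = α. Then the number of subsets e_j ⊆ V with |e_j| = d, d(e_i,e_j) = 1, and d(e_j,e_l) = α+1 equals (d−α)·(n−d−α). -/
open scoped ENNReal

lemma setDist_eq {γ : Type*} [DecidableEq γ] {e f : Finset γ} (h : e.card = f.card) :
    setDist e f = (e \ f).card := by
  unfold setDist; rw [Finset.card_sdiff_comm h, max_self]

theorem stmt_11 (n d α : ℕ) (ei el : Finset (Fin n))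
    (hi : ei.card = d) (hl : el.card = d) (hil : setDist ei el = α) :
    (Finset.univ.filter
        (fun ej : Finset (Fin n) =>
          ej.card = d ∧ setDist ei ej = 1 ∧ setDist ej el = α + 1)).card
      = (d - α) * (n - d - α) := by
  have hcard : ei.card = el.card := hi.trans hl.symm
  have hil' : (ei \ el).card = α := by rw [← setDist_eq hcard]; exact hil
  have hli' : (el \ ei).card = α := by rw [← Finset.card_sdiff_comm hcard]; exact hil'
  have key : ((ei ∩ el) ×ˢ ((ei ∪ el)ᶜ)).card
      = (Finset.univ.filter
        (fun ej : Finset (Fin n) =>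
          ej.card = d ∧ setDist ei ej = 1 ∧ setDist ej el = α + 1)).card := by
    apply Finset.card_bij (fun p _ => insert p.2 (ei.erase p.1))
    · rintro ⟨x, y⟩ hp
      simp only [Finset.mem_product, Finset.mem_inter, Finset.mem_compl,
        Finset.mem_union, not_or] at hp
      obtain ⟨⟨hxi, hxl⟩, hyi, hyl⟩ := hp
      have hyx : y ∉ ei.erase x := fun h => hyi (Finset.mem_of_mem_erase h)
      have hcj : (insert y (ei.erase x)).card = d := by
        rw [Finset.card_insert_of_notMem hyx, Finset.card_erase_of_mem hxi, hi]
        exact Nat.succ_pred_eq_of_pos (hi ▸ Finset.card_pos.2 ⟨x, hxi⟩)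
      have hsd1 : ei \ insert y (ei.erase x) = {x} := by
        ext z
        simp only [Finset.mem_sdiff, Finset.mem_insert, Finset.mem_erase,
          Finset.mem_singleton, not_or, not_and]
        constructor
        · rintro ⟨hz, hzy, hz2⟩; by_contra hzx; exact (hz2 hzx) hz
        · rintro rfl; exact ⟨hxi, fun h => hyi (h ▸ hxi), fun h => absurd rfl h⟩
      have hsd2 : insert y (ei.erase x) \ ei = {y} := by
        ext z
        simp only [Finset.mem_sdiff, Finset.mem_insert, Finset.mem_erase,
          Finset.mem_singleton]
        constructor
        · rintro ⟨hz | ⟨_, hz⟩, hzi⟩; exact hz; exact absurd hz hzi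
        · rintro rfl; exact ⟨Or.inl rfl, hyi⟩
      have hjl : insert y (ei.erase x) \ el = insert y (ei \ el) := by
        ext z
        simp only [Finset.mem_sdiff, Finset.mem_insert, Finset.mem_erase]
        constructor
        · rintro ⟨hz | ⟨hzx, hz⟩, hzl⟩; exact Or.inl hz; exact Or.inr ⟨hz, hzl⟩
        · rintro (rfl | ⟨hz, hzl⟩)
          · exact ⟨Or.inl rfl, hyl⟩
          · exact ⟨Or.inr ⟨fun h => hzl (h ▸ hxl), hz⟩, hzl⟩
      simp only [Finset.mem_filter, Finset.mem_univ, true_and]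
      refine ⟨hcj, ?_, ?_⟩
      · rw [setDist_eq (hi.trans hcj.symm), hsd1, Finset.card_singleton]
      · rw [setDist_eq (hcj.trans hl.symm), hjl,
          Finset.card_insert_of_notMem (fun h => hyi (Finset.mem_sdiff.1 h).1), hil']
    · rintro ⟨x, y⟩ hp ⟨x', y'⟩ hp' heq
      simp only [Finset.mem_product, Finset.mem_inter, Finset.mem_compl,
        Finset.mem_union, not_or] at hp hp'
      obtain ⟨⟨hxi, _⟩, hyi, _⟩ := hp
      obtain ⟨⟨hxi', _⟩, hyi', _⟩ := hp'
      simp only at heq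
      have hyy : y = y' := by
        have : y ∈ insert y' (ei.erase x') := heq ▸ Finset.mem_insert_self y _
        rcases Finset.mem_insert.1 this with h | h
        · exact h
        · exact absurd (Finset.mem_of_mem_erase h) hyi
      subst hyy
      have herase : ei.erase x = ei.erase x' := by
        have h1 : y ∉ ei.erase x := fun h => hyi (Finset.mem_of_mem_erase h)
        have h2 : y ∉ ei.erase x' := fun h => hyi (Finset.mem_of_mem_erase h)
        rw [← Finset.erase_insert h1, ← Finset.erase_insert h2, heq]
      have : x = x' := by
        by_contra hne
        have : x ∈ ei.erase x' := Finset.mem_erase.2 ⟨hne, hxi⟩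
        rw [← herase] at this
        exact (Finset.mem_erase.1 this).1 rfl
      simp [this]
    · intro ej hej
      simp only [Finset.mem_filter, Finset.mem_univ, true_and] at hej
      obtain ⟨hcj, h1, h2⟩ := hej
      rw [setDist_eq (hi.trans hcj.symm)] at h1
      rw [setDist_eq (hcj.trans hl.symm)] at h2
      obtain ⟨x, hx⟩ := Finset.card_eq_one.1 h1
      have h1' : (ej \ ei).card = 1 := by rw [← Finset.card_sdiff_comm (hi.trans hcj.symm)]; exact h1
      obtain ⟨y, hy⟩ := Finset.card_eq_one.1 h1'
      have hxi : x ∈ ei := (Finset.mem_sdiff.1 (hx ▸ Finset.mem_singleton_self x)).1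
      have hxj : x ∉ ej := (Finset.mem_sdiff.1 (hx ▸ Finset.mem_singleton_self x)).2
      have hyj : y ∈ ej := (Finset.mem_sdiff.1 (hy ▸ Finset.mem_singleton_self y)).1
      have hyi : y ∉ ei := (Finset.mem_sdiff.1 (hy ▸ Finset.mem_singleton_self y)).2
      have hej : ej = insert y (ei.erase x) := by
        ext z
        simp only [Finset.mem_insert, Finset.mem_erase]
        constructor
        · intro hz
          by_cases hzi : z ∈ ei
          · exact Or.inr ⟨fun h => hxj (h ▸ hz), hzi⟩
          · have : z ∈ ej \ ei := Finset.mem_sdiff.2 ⟨hz, hzi⟩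
            rw [hy] at this; exact Or.inl (Finset.mem_singleton.1 this)
        · rintro (rfl | ⟨hzx, hzi⟩)
          · exact hyj
          · by_contra hzj
            have : z ∈ ei \ ej := Finset.mem_sdiff.2 ⟨hzi, hzj⟩
            rw [hx] at this; exact hzx (Finset.mem_singleton.1 this)
      -- now show x ∈ el and y ∉ el
      have hyl : y ∉ el := by
        intro hyl
        have hsub : ej \ el ⊆ ei \ el := by
          intro z hz
          obtain ⟨hz1, hz2⟩ := Finset.mem_sdiff.1 hz
          rw [hej] at hz1
          rcases Finset.mem_insert.1 hz1 with rfl | hz1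
          · exact absurd hyl hz2
          · exact Finset.mem_sdiff.2 ⟨Finset.mem_of_mem_erase hz1, hz2⟩
        have := Finset.card_le_card hsub
        omega
      have hxl : x ∈ el := by
        by_contra hxl
        have heq2 : ej \ el = insert y ((ei \ el).erase x) := by
          rw [hej]
          ext z
          simp only [Finset.mem_sdiff, Finset.mem_insert, Finset.mem_erase]
          constructor
          · rintro ⟨hz | ⟨hzx, hz⟩, hzl⟩
            · exact Or.inl hz
            · exact Or.inr ⟨hzx, hz, hzl⟩
          · rintro (rfl | ⟨hzx, hz, hzl⟩)
            · exact ⟨Or.inl rfl, hyl⟩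
            · exact ⟨Or.inr ⟨hzx, hz⟩, hzl⟩
        have hxmem : x ∈ ei \ el := Finset.mem_sdiff.2 ⟨hxi, hxl⟩
        have hynot : y ∉ (ei \ el).erase x := fun h =>
          hyi (Finset.mem_sdiff.1 (Finset.mem_of_mem_erase h)).1
        rw [heq2, Finset.card_insert_of_notMem hynot,
          Finset.card_erase_of_mem hxmem, hil'] at h2
        have : 0 < α := hil' ▸ Finset.card_pos.2 ⟨x, hxmem⟩
        omega
      exact ⟨(x, y), by
        simp only [Finset.mem_product, Finset.mem_inter, Finset.mem_compl,
          Finset.mem_union, not_or]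
        exact ⟨⟨hxi, hxl⟩, hyi, hyl⟩, hej.symm⟩
  rw [← key, Finset.card_product, Finset.card_compl]
  have h1 : (ei ∩ el).card = d - α := by
    have := Finset.card_sdiff_add_card_inter ei el
    omega
  have h2 : (ei ∪ el).card = d + α := by
    have := Finset.card_sdiff_add_card_inter el ei
    have := Finset.card_union_add_card_inter ei el
    omega
  rw [h1, h2, Fintype.card_fin, ← Nat.sub_sub]
end

section
/- Let V be a finite set of size n, and let e_j, e_l ⊆ V with |e_j| = |e_l| = d and d(e_j,e_l) = α+1 for a natural number α. Then the number of subsets e_i ⊆ V with |e_i| = d, d(e_j,e_i) = 1, and d(e_i,e_l) = α equals (α+1)². -/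
open scoped ENNReal

theorem stmt_12 (n d α : ℕ) (ej el : Finset (Fin n))
    (hj : ej.card = d) (hl : el.card = d) (hjl : setDist ej el = α + 1) :
    (Finset.univ.filter
        (fun ei : Finset (Fin n) =>
          ei.card = d ∧ setDist ej ei = 1 ∧ setDist ei el = α)).card
      = (α + 1) ^ 2 := by
  classical
  have hsymm : (ej \ el).card = (el \ ej).card :=
    Finset.card_sdiff_comm (hj.trans hl.symm)
  have h1 : (ej \ el).card = α + 1 := by
    simpa [setDist, hsymm] using hjl
  have h2 : (el \ ej).card = α + 1 := hsymm ▸ h1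
  have key : Finset.univ.filter
        (fun ei : Finset (Fin n) =>
          ei.card = d ∧ setDist ej ei = 1 ∧ setDist ei el = α)
      = ((ej \ el) ×ˢ (el \ ej)).image
        (fun p => insert p.2 (ej.erase p.1)) := by
    ext ei
    simp only [Finset.mem_filter, Finset.mem_univ, true_and, Finset.mem_image,
      Finset.mem_product, Finset.mem_sdiff, Prod.exists]
    constructor
    · rintro ⟨hcard, hd1, hd2⟩
      -- from setDist ej ei = 1 deduce ej \ ei and ei \ ej are singletons
      have hce : (ej \ ei).card = (ei \ ej).card :=
        Finset.card_sdiff_comm (hj.trans hcard.symm)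
      have hje : (ej \ ei).card = 1 := by simpa [setDist, hce] using hd1
      have hej : (ei \ ej).card = 1 := hce ▸ hje
      obtain ⟨x, hx⟩ := Finset.card_eq_one.mp hje
      obtain ⟨y, hy⟩ := Finset.card_eq_one.mp hej
      have hxj : x ∈ ej := by
        have : x ∈ ej \ ei := hx ▸ Finset.mem_singleton_self x
        exact (Finset.mem_sdiff.mp this).1
      have hxi : x ∉ ei := by
        have : x ∈ ej \ ei := hx ▸ Finset.mem_singleton_self x
        exact (Finset.mem_sdiff.mp this).2
      have hyi : y ∈ ei := by
        have : y ∈ ei \ ej := hy ▸ Finset.mem_singleton_self y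
        exact (Finset.mem_sdiff.mp this).1
      have hyj : y ∉ ej := by
        have : y ∈ ei \ ej := hy ▸ Finset.mem_singleton_self y
        exact (Finset.mem_sdiff.mp this).2
      have hei : ei = insert y (ej.erase x) := by
        ext z
        simp only [Finset.mem_insert, Finset.mem_erase]
        constructor
        · intro hz
          by_cases hzj : z ∈ ej
          · right
            refine ⟨?_, hzj⟩
            rintro rfl; exact hxi hz
          · left
            have : z ∈ ei \ ej := Finset.mem_sdiff.mpr ⟨hz, hzj⟩
            rw [hy] at this
            exact Finset.mem_singleton.mp this
        · rintro (rfl | ⟨hzx, hzj⟩)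
          · exact hyi
          · by_contra hzi
            have : z ∈ ej \ ei := Finset.mem_sdiff.mpr ⟨hzj, hzi⟩
            rw [hx] at this
            exact hzx (Finset.mem_singleton.mp this)
      -- now show y ∈ el and x ∉ el
      have hcel : (ei \ el).card = (el \ ei).card :=
        Finset.card_sdiff_comm (hcard.trans hl.symm)
      have hiel : (ei \ el).card = α := by simpa [setDist, hcel] using hd2
      have hsub : (ej \ el).erase x ⊆ ei \ el := by
        intro z hz
        obtain ⟨hzx, hzj, hzl⟩ := by
          simpa [Finset.mem_erase, Finset.mem_sdiff] using hz
        refine Finset.mem_sdiff.mpr ⟨?_, hzl⟩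
        rw [hei]
        exact Finset.mem_insert_of_mem (Finset.mem_erase.mpr ⟨hzx, hzj⟩)
      have hyel : y ∈ el := by
        by_contra hyel
        have hsub' : insert y ((ej \ el).erase x) ⊆ ei \ el := by
          intro z hz
          rcases Finset.mem_insert.mp hz with rfl | hz
          · exact Finset.mem_sdiff.mpr ⟨hyi, hyel⟩
          · exact hsub hz
        have hc := Finset.card_le_card hsub'
        rw [Finset.card_insert_of_notMem (by
          simp only [Finset.mem_erase, Finset.mem_sdiff]
          rintro ⟨-, hyj', -⟩; exact hyj hyj')] at hc
        have he := Finset.pred_card_le_card_erase (s := ej \ el) (a := x)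
        omega
      have hxel : x ∉ el := by
        by_contra hxel
        have hsub' : ej \ el ⊆ ei \ el := by
          intro z hz
          obtain ⟨hzj, hzl⟩ := Finset.mem_sdiff.mp hz
          refine Finset.mem_sdiff.mpr ⟨?_, hzl⟩
          rw [hei]
          refine Finset.mem_insert_of_mem (Finset.mem_erase.mpr ⟨?_, hzj⟩)
          rintro rfl; exact hzl hxel
        have := Finset.card_le_card hsub'
        omega
      exact ⟨x, y, ⟨⟨hxj, hxel⟩, hyel, hyj⟩, hei.symm⟩
    · rintro ⟨x, y, ⟨⟨hxj, hxl⟩, hyl, hyj⟩, rfl⟩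
      have hxy : x ≠ y := fun h => hyj (h ▸ hxj)
      have hynex : y ∉ ej.erase x := fun h => hyj (Finset.mem_of_mem_erase h)
      refine ⟨?_, ?_, ?_⟩
      · rw [Finset.card_insert_of_notMem hynex,
          Finset.card_erase_of_mem hxj, hj]
        have hd : 0 < d := hj ▸ Finset.card_pos.mpr ⟨x, hxj⟩
        omega
      · -- setDist ej (insert y (ej.erase x)) = 1
        have hA : ej \ insert y (ej.erase x) = {x} := by
          ext z
          simp only [Finset.mem_sdiff, Finset.mem_insert, Finset.mem_erase,
            Finset.mem_singleton]
          constructor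
          · rintro ⟨hzj, hz⟩
            push_neg at hz
            by_contra hzx
            exact (hz.2 hzx hzj).elim
          · rintro rfl
            exact ⟨hxj, by push_neg; exact ⟨hxy, fun h => absurd rfl h⟩⟩
        have hB : insert y (ej.erase x) \ ej = {y} := by
          ext z
          simp only [Finset.mem_sdiff, Finset.mem_insert, Finset.mem_erase,
            Finset.mem_singleton]
          constructor
          · rintro ⟨rfl | ⟨-, hzj⟩, hz⟩
            · rfl
            · exact (hz hzj).elim
          · rintro rfl
            exact ⟨Or.inl rfl, hyj⟩
        simp [setDist, hA, hB]
      · -- setDist (insert y (ej.erase x)) el = α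
        have hA : insert y (ej.erase x) \ el = (ej \ el).erase x := by
          ext z
          simp only [Finset.mem_sdiff, Finset.mem_insert, Finset.mem_erase]
          constructor
          · rintro ⟨rfl | ⟨hzx, hzj⟩, hzl⟩
            · exact (hzl hyl).elim
            · exact ⟨hzx, hzj, hzl⟩
          · rintro ⟨hzx, hzj, hzl⟩
            exact ⟨Or.inr ⟨hzx, hzj⟩, hzl⟩
        have hB : el \ insert y (ej.erase x) = (el \ ej).erase y := by
          ext z
          simp only [Finset.mem_sdiff, Finset.mem_insert, Finset.mem_erase]
          constructor
          · rintro ⟨hzl, hz⟩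
            push_neg at hz
            refine ⟨hz.1, hzl, fun hzj => ?_⟩
            exact hz.2 (fun h => (h ▸ hxl) hzl) hzj
          · rintro ⟨hzy, hzl, hzj⟩
            refine ⟨hzl, ?_⟩
            push_neg
            exact ⟨hzy, fun _ => hzj⟩
        have hcA : ((ej \ el).erase x).card = α := by
          rw [Finset.card_erase_of_mem (Finset.mem_sdiff.mpr ⟨hxj, hxl⟩), h1]
          omega
        have hcB : ((el \ ej).erase y).card = α := by
          rw [Finset.card_erase_of_mem (Finset.mem_sdiff.mpr ⟨hyl, hyj⟩), h2]
          omega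
        simp [setDist, hA, hB, hcA, hcB]
  rw [key, Finset.card_image_of_injOn, Finset.card_product, h1, h2, sq]
  rintro ⟨x1, y1⟩ h1' ⟨x2, y2⟩ h2' heq
  obtain ⟨hm1, hm2⟩ := Finset.mem_product.mp h1'
  obtain ⟨hm3, hm4⟩ := Finset.mem_product.mp h2'
  have heq2 : insert y1 (ej.erase x1) = insert y2 (ej.erase x2) := heq
  have hx1j : x1 ∈ ej := (Finset.mem_sdiff.mp hm1).1
  have hy1j : y1 ∉ ej := (Finset.mem_sdiff.mp hm2).2
  have hx2j : x2 ∈ ej := (Finset.mem_sdiff.mp hm3).1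
  have hy2j : y2 ∉ ej := (Finset.mem_sdiff.mp hm4).2
  have hy : y1 = y2 := by
    have : y1 ∈ insert y2 (ej.erase x2) := heq2 ▸ Finset.mem_insert_self y1 _
    rcases Finset.mem_insert.mp this with h | h
    · exact h
    · exact absurd (Finset.mem_of_mem_erase h) hy1j
  have hx : x1 = x2 := by
    by_contra hne
    have hx2mem : x2 ∈ insert y1 (ej.erase x1) :=
      Finset.mem_insert_of_mem (Finset.mem_erase.mpr ⟨fun h => hne h.symm, hx2j⟩)
    rw [heq2] at hx2mem
    rcases Finset.mem_insert.mp hx2mem with h | h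
    · exact hy2j (h ▸ hx2j)
    · exact (Finset.mem_erase.mp h).1 rfl
  exact Prod.ext hx hy
end

section
/- Let n, d, β be natural numbers with 1 ≤ β, β ≤ n − d, and β < n. Then C(n−d,β)/C(n,β) ≥ 1 − d·β/(n−β), where C denotes the binomial coefficient and the inequality is over the real numbers. -/
open scoped ENNReal

/-! Each factor `(n - d - i) / (n - i)` of `C(n - d, β) / C(n, β) = ∏_{i < β} (n - d - i) / (n - i)`
is at least `1 - d / (n - β)`, so the ratio is at least `(1 - d / (n - β)) ^ β`, and Bernoulli's
inequality bounds this power below by `1 - β d / (n - β)`. -/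

lemma one_sub_div_mul_le {n d b i : ℝ} (hd : 0 ≤ d) (hib : i ≤ b) (hbn : b < n) :
    (1 - d / (n - b)) * (n - i) ≤ n - d - i := by
  have hnb : 0 < n - b := sub_pos.mpr hbn
  have key : n - d - i - (1 - d / (n - b)) * (n - i) = d * (b - i) / (n - b) := by
    field_simp
    ring
  have : 0 ≤ d * (b - i) / (n - b) := by
    have : 0 ≤ b - i := sub_nonneg.mpr hib
    positivity
  linarith

lemma cast_div_cast_sub_le_one {n d β : ℕ} (hdβn : d + β ≤ n) :
    (d : ℝ) / (n - β) ≤ 1 := by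
  have hdβn' : (d : ℝ) + β ≤ n := by exact_mod_cast hdβn
  exact div_le_one_of_le₀ (by linarith) (by linarith [d.cast_nonneg (α := ℝ)])

lemma one_sub_div_pow_mul_descFactorial_le {n d β : ℕ} (hdβn : d + β ≤ n) (hβn : β < n) :
    (1 - (d : ℝ) / (n - β)) ^ β * n.descFactorial β ≤ (n - d).descFactorial β := by
  have hpow : (1 - (d : ℝ) / (n - β)) ^ β = ∏ _i ∈ Finset.range β, (1 - (d : ℝ) / (n - β)) := by
    simp
  rw [Nat.descFactorial_eq_prod_range, Nat.descFactorial_eq_prod_range, Nat.cast_prod,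
    Nat.cast_prod, hpow, ← Finset.prod_mul_distrib]
  refine Finset.prod_le_prod (fun i _ => ?_) (fun i hi => ?_)
  · have : 0 ≤ 1 - (d : ℝ) / (n - β) := sub_nonneg.mpr (cast_div_cast_sub_le_one hdβn)
    positivity
  · have hiβ : i < β := Finset.mem_range.mp hi
    rw [Nat.cast_sub (by omega), Nat.sub_sub, Nat.cast_sub (by omega), Nat.cast_add,
      ← sub_sub]
    exact one_sub_div_mul_le d.cast_nonneg (by exact_mod_cast hiβ.le) (by exact_mod_cast hβn)

lemma cast_choose_div_cast_choose (a b k : ℕ) :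
    (a.choose k : ℝ) / b.choose k = a.descFactorial k / b.descFactorial k := by
  simp only [Nat.descFactorial_eq_factorial_mul_choose, Nat.cast_mul]
  rw [mul_div_mul_left _ _ (by positivity)]

theorem stmt_19 (n d β : ℕ) (hβ1 : 1 ≤ β) (hβnd : β ≤ n - d) (hβn : β < n) :
    ((n - d).choose β : ℝ) / (n.choose β : ℝ)
      ≥ 1 - ((d : ℝ) * (β : ℝ)) / ((n : ℝ) - (β : ℝ)) := by
  have hdβn : d + β ≤ n := by omega
  have hdn := cast_div_cast_sub_le_one hdβn
  have bernoulli := one_add_mul_le_pow (a := -((d : ℝ) / (n - β))) (by linarith) β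
  have hpos : (0 : ℝ) < n.descFactorial β := by exact_mod_cast Nat.descFactorial_pos.mpr hβn.le
  rw [cast_choose_div_cast_choose, ge_iff_le, le_div_iff₀ hpos]
  calc (1 - (d : ℝ) * β / (n - β)) * n.descFactorial β
      = (1 + β * -((d : ℝ) / (n - β))) * n.descFactorial β := by ring
    _ ≤ (1 - (d : ℝ) / (n - β)) ^ β * n.descFactorial β := by
        gcongr
        simpa [← sub_eq_add_neg] using bernoulli
    _ ≤ (n - d).descFactorial β := one_sub_div_pow_mul_descFactorial_le hdβn hβn
end
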